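/- Fix a dense set T ⊆ ⋃_n ℕ^n × ℕ^n (for all (u₀,u₁) there is (t₀,t₁) ∈ T with u_i ⊆ t_i) and let H₀^ω be the directed graph on X_α with edges (t₀⌢0⌢x, t₁⌢1⌢x) for (t₀,t₁) ∈ T and x ∈ ℕ^ℕ (restricted to X_α). Let R be a total quasi-order on X_α containing H₀^ω which is Baire measurable. Then some equivalence class of the relation x ≡_R y iff (x R y and y R x) is comeager in X_α. -/

import Mathlib

open Set

/-- The concatenation `s⌢i⌢x ∈ ℕ^ℕ` of a finite sequence `s`, a single term `i`, and `x ∈ ℕ^ℕ`. -/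
def extSeq (s : List ℕ) (i : ℕ) (x : ℕ → ℕ) : ℕ → ℕ := fun n =>
  if h : n < s.length then s.get ⟨n, h⟩ else if n = s.length then i else x (n - s.length - 1)

/-- The dense `Gδ` set `X_α = {x ∈ ℕ^ℕ : ∀n ∃m ≥ n, x↾m ∈ α(m)^m}`. -/
def Xalpha (α : ℕ → ℕ) : Set (ℕ → ℕ) := {x | ∀ n, ∃ m ≥ n, ∀ i < m, x i < α m}

/-!
Write `U` for an open set differing from `R` by a meagre set. If `U` were not dense, some open box
`A × B` would miss it. By Kuratowski–Ulam a generic `a` satisfies `R a y ↔ (a, y) ∈ U` for generic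
`y`, and then the open `U`-section of `a` is empty or dense: from `(a, b) ∈ U`, density of `T`
gives `(t₀, t₁) ∈ T` with `t₀` extending a neighbourhood of `b` and `t₁` any prescribed
neighbourhood, and for generic `x` the edge `t₀⌢0⌢x H₀^ω t₁⌢1⌢x` with transitivity carries
`R a (t₀⌢0⌢x)` to `R a (t₁⌢1⌢x)`. For generic `a ∈ A` the section misses `B`, hence is empty, so
two generic points of `A` are `R`-incomparable, against totality. Hence `R` is comeagre, and by
Kuratowski–Ulam once more the `≡_R`-class of a generic point is comeagre.
-/

open Filter Topology PiNat

theorem tendsto_swap_residual {X Y : Type*} [TopologicalSpace X] [TopologicalSpace Y] :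
    Tendsto Prod.swap (residual (X × Y)) (residual (Y × X)) :=
  tendsto_residual_of_isOpenMap continuous_swap (Homeomorph.prodComm X Y).isOpenMap

section KuratowskiUlam

variable {X Y : Type*} [TopologicalSpace X] [TopologicalSpace Y] [SecondCountableTopology Y]

theorem eventually_residual_dense_section {s : Set (X × Y)} (hso : IsOpen s) (hsd : Dense s) :
    ∀ᶠ a in residual X, Dense {b | (a, b) ∈ s} := by
  obtain ⟨B, hBc, -, hB⟩ := TopologicalSpace.exists_countable_basis Y
  have hmeets : ∀ V ∈ {V ∈ B | V.Nonempty}, ∀ᶠ a in residual X, ∃ b ∈ V, (a, b) ∈ s := by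
    rintro V ⟨hV, hVne⟩
    have hproj : {a | ∃ b ∈ V, (a, b) ∈ s} = Prod.fst '' (s ∩ univ ×ˢ V) := by
      ext a
      simp [and_comm]
    refine residual_of_dense_open ?_ (dense_iff_inter_open.2 fun A hA hAne => ?_)
    · exact hproj ▸ isOpenMap_fst _ (hso.inter (isOpen_univ.prod (hB.isOpen hV)))
    · obtain ⟨q, ⟨hqA, hqV⟩, hqs⟩ :=
        hsd.inter_open_nonempty _ (hA.prod (hB.isOpen hV)) (hAne.prod hVne)
      exact ⟨q.1, hqA, q.2, hqV, hqs⟩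
  filter_upwards [(eventually_countable_ball (hBc.mono (sep_subset _ _))).2 hmeets] with a ha
  exact hB.dense_iff.2 fun V hV hVne => ha V ⟨hV, hVne⟩

theorem Filter.Eventually.residual_curry {p : X × Y → Prop}
    (h : ∀ᶠ q in residual (X × Y), p q) : ∀ᶠ a in residual X, ∀ᶠ b in residual Y, p (a, b) := by
  obtain ⟨S, hSo, hSd, hSc, hSp⟩ := mem_residual_iff.1 h
  filter_upwards [(eventually_countable_ball hSc).2 fun s hs =>
    eventually_residual_dense_section (hSo s hs) (hSd s hs)] with a ha
  filter_upwards [(eventually_countable_ball hSc).2 fun s hs =>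
    residual_of_dense_open ((hSo s hs).preimage (Continuous.prodMk_right a)) (ha s hs)] with b hb
  exact hSp (mem_sInter.2 hb)

end KuratowskiUlam

theorem extSeq_apply_of_lt (s : List ℕ) (i : ℕ) (x : ℕ → ℕ) {n : ℕ} (h : n < s.length) :
    extSeq s i x n = s[n] := by
  simp [extSeq, h]

theorem extSeq_apply_of_le (s : List ℕ) (i : ℕ) (x y : ℕ → ℕ) {n : ℕ} (h : n ≤ s.length) :
    extSeq s i x n = extSeq s i y n := by
  simp only [extSeq]
  split_ifs <;> first | rfl | omega

theorem extSeq_apply_add (s : List ℕ) (i : ℕ) (x : ℕ → ℕ) (n : ℕ) :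
    extSeq s i x (n + s.length + 1) = x n := by
  simp only [extSeq]
  split_ifs <;> first | omega | congr 1; omega

theorem continuous_extSeq (s : List ℕ) (i : ℕ) : Continuous (extSeq s i) :=
  continuous_pi fun n => by
    unfold extSeq
    split_ifs <;> fun_prop

theorem extSeq_mem_cylinder {s : List ℕ} {n : ℕ} {z : ℕ → ℕ}
    (h : List.ofFn (fun j : Fin n => z j) <+: s) (i : ℕ) (x : ℕ → ℕ) :
    extSeq s i x ∈ cylinder z n := by
  intro j hj
  have hjs : j < s.length := hj.trans_le (by simpa using h.length_le)
  rw [extSeq_apply_of_lt _ _ _ hjs, ← h.getElem (by simpa using hj)]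
  simp

theorem isOpenMap_extSeq (s : List ℕ) (i : ℕ) : IsOpenMap (extSeq s i) := by
  intro O hO
  let shift : (ℕ → ℕ) → ℕ → ℕ := fun y n => y (n + s.length + 1)
  have himage : extSeq s i '' O = cylinder (extSeq s i 0) (s.length + 1) ∩ shift ⁻¹' O := by
    ext y
    constructor
    · rintro ⟨x, hx, rfl⟩
      refine ⟨fun n hn => extSeq_apply_of_le s i x 0 (by omega), ?_⟩
      simpa [shift, extSeq_apply_add] using hx
    · rintro ⟨hy, hyO⟩
      refine ⟨shift y, hyO, funext fun n => ?_⟩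
      rcases le_or_gt n s.length with hn | hn
      · rw [extSeq_apply_of_le s i _ 0 hn, hy n (by omega)]
      · obtain ⟨k, rfl⟩ : ∃ k, n = k + s.length + 1 := ⟨n - s.length - 1, by omega⟩
        rw [extSeq_apply_add]
  rw [himage]
  exact (isOpen_cylinder _ _ _).inter (hO.preimage (by fun_prop))

theorem tendsto_extSeq_residual (s : List ℕ) (i : ℕ) :
    Tendsto (extSeq s i) (residual (ℕ → ℕ)) (residual (ℕ → ℕ)) :=
  tendsto_residual_of_isOpenMap (continuous_extSeq s i) (isOpenMap_extSeq s i)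

theorem mem_Xalpha_of_forall_lt {α : ℕ → ℕ} (hα : StrictMono α) {x : ℕ → ℕ} {B : ℕ}
    (hx : ∀ i, x i < B) : x ∈ Xalpha α := fun n =>
  ⟨max n B, le_max_left _ _, fun i _ => (hx i).trans_le ((le_max_right _ _).trans hα.le_apply)⟩

theorem dense_Xalpha {α : ℕ → ℕ} (hα : StrictMono α) : Dense (Xalpha α) := by
  refine (isTopologicalBasis_cylinders _).dense_iff.2 ?_
  rintro _ ⟨x, n, rfl⟩ -
  refine ⟨fun i => if i < n then x i else 0, fun i hi => if_pos hi, mem_Xalpha_of_forall_lt hα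
    (B := (Finset.range n).sup x + 1) fun i => ?_⟩
  split_ifs with hi
  · exact Nat.lt_succ_of_le (Finset.le_sup (Finset.mem_range.2 hi))
  · exact Nat.succ_pos _

theorem eventually_residual_mem_Xalpha {α : ℕ → ℕ} (hα : StrictMono α) :
    ∀ᶠ x in residual (ℕ → ℕ), x ∈ Xalpha α := by
  have hX : Xalpha α = ⋂ n, {x | ∃ m ≥ n, ∀ i < m, x i < α m} := by
    ext
    simp [Xalpha]
  refine hX ▸ countable_iInter_mem.2 fun n =>
    residual_of_dense_open ?_ ((dense_Xalpha hα).mono ?_)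
  · refine isOpen_iff_forall_mem_open.2 fun x ⟨m, hnm, hm⟩ =>
      ⟨cylinder x m, ?_, isOpen_cylinder _ _ _, self_mem_cylinder _ _⟩
    exact fun y hy => ⟨m, hnm, fun i hi => (hy i hi).symm ▸ hm i hi⟩
  · exact fun x hx => hx n

section QuasiOrder

variable {α : ℕ → ℕ} {T : Set (List ℕ × List ℕ)} {R : (ℕ → ℕ) → (ℕ → ℕ) → Prop}

theorem dense_section_of_nonempty (hα : StrictMono α)
    (hTdense : ∀ u₀ u₁ : List ℕ, ∃ t ∈ T, u₀ <+: t.1 ∧ u₁ <+: t.2)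
    (htrans : ∀ x y z, x ∈ Xalpha α → y ∈ Xalpha α → z ∈ Xalpha α → R x y → R y z → R x z)
    (hH0 : ∀ t ∈ T, ∀ x : ℕ → ℕ, extSeq t.1 0 x ∈ Xalpha α → extSeq t.2 1 x ∈ Xalpha α →
      R (extSeq t.1 0 x) (extSeq t.2 1 x))
    {U : Set ((ℕ → ℕ) × (ℕ → ℕ))} (hU : IsOpen U) {a : ℕ → ℕ} (ha : a ∈ Xalpha α)
    (haU : ∀ᶠ y in residual (ℕ → ℕ), R a y ↔ (a, y) ∈ U) (hne : {y | (a, y) ∈ U}.Nonempty) :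
    Dense {y | (a, y) ∈ U} := by
  obtain ⟨b, hb⟩ := hne
  obtain ⟨_, ⟨c, k, rfl⟩, hbc, hcU⟩ := (isTopologicalBasis_cylinders _).exists_subset_of_mem_open
    hb (hU.preimage (Continuous.prodMk_right a))
  rw [← mem_cylinder_iff_eq.1 hbc] at hcU
  refine (isTopologicalBasis_cylinders _).dense_iff.2 ?_
  rintro _ ⟨z, n, rfl⟩ -
  obtain ⟨t, ht, hbt, hzt⟩ :=
    hTdense (List.ofFn fun j : Fin k => b j) (List.ofFn fun j : Fin n => z j)
  have hgood : ∀ᶠ y in residual (ℕ → ℕ), y ∈ Xalpha α ∧ (R a y ↔ (a, y) ∈ U) :=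
    (eventually_residual_mem_Xalpha hα).and haU
  obtain ⟨x, ⟨he₀X, he₀U⟩, he₁X, he₁U⟩ := (dense_of_mem_residual
    (((tendsto_extSeq_residual t.1 0).eventually hgood).and
      ((tendsto_extSeq_residual t.2 1).eventually hgood))).nonempty
  have hae₀ : R a (extSeq t.1 0 x) := he₀U.2 (hcU (extSeq_mem_cylinder hbt 0 x))
  exact ⟨extSeq t.2 1 x, extSeq_mem_cylinder hzt 1 x,
    he₁U.1 (htrans _ _ _ ha he₀X he₁X hae₀ (hH0 t ht x he₀X he₁X))⟩

theorem eventually_residual_rel (hα : StrictMono α)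
    (hTdense : ∀ u₀ u₁ : List ℕ, ∃ t ∈ T, u₀ <+: t.1 ∧ u₁ <+: t.2)
    (htrans : ∀ x y z, x ∈ Xalpha α → y ∈ Xalpha α → z ∈ Xalpha α → R x y → R y z → R x z)
    (htotal : ∀ x y, x ∈ Xalpha α → y ∈ Xalpha α → R x y ∨ R y x)
    (hH0 : ∀ t ∈ T, ∀ x : ℕ → ℕ, extSeq t.1 0 x ∈ Xalpha α → extSeq t.2 1 x ∈ Xalpha α →
      R (extSeq t.1 0 x) (extSeq t.2 1 x))
    (hBaire : BaireMeasurableSet {p : (ℕ → ℕ) × (ℕ → ℕ) | R p.1 p.2}) :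
    ∀ᶠ q in residual ((ℕ → ℕ) × (ℕ → ℕ)), R q.1 q.2 := by
  obtain ⟨U, hUo, hRU⟩ := hBaire.residualEq_isOpen
  have hRU' : ∀ᶠ q in residual _, R q.1 q.2 ↔ q ∈ U := hRU.mono fun q hq => iff_of_eq hq
  suffices hUd : Dense U by
    filter_upwards [hRU', residual_of_dense_open hUo hUd] with q hq hqU using hq.2 hqU
  by_contra hUd
  obtain ⟨V, hVo, ⟨p, hp⟩, hVU⟩ : ∃ V, IsOpen V ∧ V.Nonempty ∧ ¬(V ∩ U).Nonempty := by
    simpa [dense_iff_inter_open] using hUd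
  obtain ⟨A, B, hA, hB, hpA, hpB, hABV⟩ := isOpen_prod_iff.1 hVo p.1 p.2 hp
  let good : (ℕ → ℕ) → Prop := fun a => a ∈ Xalpha α ∧ ∀ᶠ y in residual _, R a y ↔ (a, y) ∈ U
  have hgood : ∀ᶠ a in residual _, good a :=
    (eventually_residual_mem_Xalpha hα).and hRU'.residual_curry
  -- the `U`-section of a good point is empty or dense, and that of a point of `A` misses `B`
  have hempty : ∀ a ∈ A, good a → ∀ y, (a, y) ∉ U := by
    rintro a haA ⟨ha, haU⟩ y hy
    obtain ⟨b, hbB, hb⟩ := (dense_section_of_nonempty hα hTdense htrans hH0 hUo ha haU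
      ⟨y, hy⟩).inter_open_nonempty B hB ⟨p.2, hpB⟩
    exact hVU ⟨(a, b), hABV ⟨haA, hbB⟩, hb⟩
  have hpair : ∀ᶠ q in residual ((ℕ → ℕ) × (ℕ → ℕ)),
      good q.1 ∧ good q.2 ∧ (R q.1 q.2 ↔ q ∈ U) ∧ (R q.2 q.1 ↔ q.swap ∈ U) := by
    filter_upwards [(tendsto_residual_of_isOpenMap continuous_fst isOpenMap_fst).eventually hgood,
      (tendsto_residual_of_isOpenMap continuous_snd isOpenMap_snd).eventually hgood, hRU',
      tendsto_swap_residual.eventually hRU'] with q h₁ h₂ h₃ h₄ using ⟨h₁, h₂, h₃, h₄⟩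
  obtain ⟨q, ⟨hqA₁, hqA₂⟩, hq₁, hq₂, hq, hq'⟩ := (dense_of_mem_residual hpair).inter_open_nonempty
    (A ×ˢ A) (hA.prod hA) ⟨(p.1, p.1), hpA, hpA⟩
  rcases htotal q.1 q.2 hq₁.1 hq₂.1 with h | h
  · exact hempty q.1 hqA₁ hq₁ q.2 (hq.1 h)
  · exact hempty q.2 hqA₂ hq₂ q.1 (hq'.1 h)

end QuasiOrder

theorem stmt10_general (α : ℕ → ℕ) (hα : StrictMono α)
    (T : Set (List ℕ × List ℕ))
    (hTdense : ∀ u₀ u₁ : List ℕ, ∃ t ∈ T, u₀ <+: t.1 ∧ u₁ <+: t.2)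
    (R : (ℕ → ℕ) → (ℕ → ℕ) → Prop)
    (htrans : ∀ x y z, x ∈ Xalpha α → y ∈ Xalpha α → z ∈ Xalpha α →
      R x y → R y z → R x z)
    (htotal : ∀ x y, x ∈ Xalpha α → y ∈ Xalpha α → R x y ∨ R y x)
    (hH0 : ∀ t ∈ T, ∀ x : ℕ → ℕ, extSeq t.1 0 x ∈ Xalpha α → extSeq t.2 1 x ∈ Xalpha α →
      R (extSeq t.1 0 x) (extSeq t.2 1 x))
    (hBaire : BaireMeasurableSet {p : (ℕ → ℕ) × (ℕ → ℕ) | R p.1 p.2}) :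
    ∃ x₀ ∈ Xalpha α, {y | y ∈ Xalpha α ∧ R x₀ y ∧ R y x₀} ∈ residual (ℕ → ℕ) := by
  have hR := eventually_residual_rel hα hTdense htrans htotal hH0 hBaire
  have hRswap : ∀ᶠ q in residual ((ℕ → ℕ) × (ℕ → ℕ)), R q.2 q.1 :=
    tendsto_swap_residual.eventually hR
  obtain ⟨x₀, hx₀, hclass⟩ := (dense_of_mem_residual
    ((eventually_residual_mem_Xalpha hα).and (hR.and hRswap).residual_curry)).nonempty
  exact ⟨x₀, hx₀, (eventually_residual_mem_Xalpha hα).and hclass⟩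

/-- Let `T` be a dense set of pairs of finite sequences of equal length and `H₀^ω`
the digraph on `X_α` with edges `(t₀⌢0⌢x, t₁⌢1⌢x)` for `(t₀,t₁) ∈ T`. If `R` is a total,
Baire-measurable quasi-order on `X_α` containing `H₀^ω`, then some `≡_R`-class is comeager
in `X_α`. -/
theorem stmt10 (α : ℕ → ℕ) (hα : StrictMono α)
    (T : Set (List ℕ × List ℕ))
    (hTlen : ∀ t ∈ T, t.1.length = t.2.length)
    (hTdense : ∀ u₀ u₁ : List ℕ, ∃ t ∈ T, u₀ <+: t.1 ∧ u₁ <+: t.2)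
    (R : (ℕ → ℕ) → (ℕ → ℕ) → Prop)
    (hrefl : ∀ x ∈ Xalpha α, R x x)
    (htrans : ∀ x y z, x ∈ Xalpha α → y ∈ Xalpha α → z ∈ Xalpha α →
      R x y → R y z → R x z)
    (htotal : ∀ x y, x ∈ Xalpha α → y ∈ Xalpha α → R x y ∨ R y x)
    (hH0 : ∀ t ∈ T, ∀ x : ℕ → ℕ, extSeq t.1 0 x ∈ Xalpha α → extSeq t.2 1 x ∈ Xalpha α →
      R (extSeq t.1 0 x) (extSeq t.2 1 x))
    (hBaire : BaireMeasurableSet {p : (ℕ → ℕ) × (ℕ → ℕ) | R p.1 p.2}) :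
    ∃ x₀ ∈ Xalpha α, {y | y ∈ Xalpha α ∧ R x₀ y ∧ R y x₀} ∈ residual (ℕ → ℕ) :=
  stmt10_general α hα T hTdense R htrans htotal hH0 hBaire
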